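/- arXiv:2602.01692 — 2 statements merged into one kernel-verified Lean document; each statement's English description precedes it below -/
import Mathlib

section
/- Let \(\ell \ge 2k\) and let \(\mathcal{F}\) be an \(\ell\)-shifted intersecting family of k-element subsets of [n]. Then the trace family \(\mathcal{G} = \{A \cap [\ell] : A \in \mathcal{F}\}\) is intersecting: any two members of \(\mathcal{G}\) have nonempty intersection. -/
open Finset

/-- The (i,j)-shift of a single set with respect to a family. -/
def shiftSet (F : Finset (Finset ℕ)) (i j : ℕ) (A : Finset ℕ) : Finset ℕ :=
  if i ∈ A ∧ j ∉ A ∧ (insert j A).erase i ∉ F then (insert j A).erase i else A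

/-- The (i,j)-shift of a family. -/
def shiftFam (F : Finset (Finset ℕ)) (i j : ℕ) : Finset (Finset ℕ) :=
  F.image (shiftSet F i j)

/-- A family is intersecting if any two members meet. -/
def IntersectingFam (F : Finset (Finset ℕ)) : Prop :=
  ∀ A ∈ F, ∀ B ∈ F, (A ∩ B).Nonempty

/-- A family is t-intersecting if any two members share at least t elements. -/
def TIntersecting (t : ℕ) (F : Finset (Finset ℕ)) : Prop :=
  ∀ A ∈ F, ∀ B ∈ F, t ≤ (A ∩ B).card

/-- A family on [n] is ℓ-shifted if it is invariant under all (i,j)-shifts with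
    i ∈ [n] \ [ℓ] and j ∈ [ℓ]. -/
def IsShifted (ℓ n : ℕ) (F : Finset (Finset ℕ)) : Prop :=
  ∀ i ∈ Icc 1 n, ∀ j ∈ Icc 1 ℓ, i ∉ Icc 1 ℓ → shiftFam F i j = F

/-- The degree of an element in a family. -/
def deg (F : Finset (Finset ℕ)) (i : ℕ) : ℕ := (F.filter (fun A => i ∈ A)).card

/-!
Suppose `A ∩ [ℓ]` misses `B` for some `A, B ∈ F`, and take such an `A` with the fewest elements
outside `[ℓ]`. As `F` is intersecting, `A` has an element `i ∉ [ℓ]`. Then `A ∩ [ℓ]` and `B ∩ [ℓ]`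
together have fewer than `2k ≤ ℓ` elements, so some `j ∈ [ℓ]` lies in neither `A` nor `B`, and
shiftedness puts `A - i + j` in `F`: a counterexample with fewer elements outside `[ℓ]`.
-/

theorem erase_insert_mem_of_shiftFam_eq {F : Finset (Finset ℕ)} {i j : ℕ}
    (hF : shiftFam F i j = F) {A : Finset ℕ} (hA : A ∈ F) (hi : i ∈ A) (hj : j ∉ A) :
    (insert j A).erase i ∈ F := by
  by_contra hA'
  have hmem : shiftSet F i j A ∈ shiftFam F i j := mem_image_of_mem _ hA
  rw [hF, shiftSet, if_pos ⟨hi, hj, hA'⟩] at hmem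
  exact hA' hmem

theorem exists_mem_notMem_of_card_inter_add_lt {α : Type*} [DecidableEq α] {A B S : Finset α}
    (h : (A ∩ S).card + (B ∩ S).card < S.card) : ∃ j ∈ S, j ∉ A ∧ j ∉ B := by
  have hlt : ((A ∪ B) ∩ S).card < S.card := by
    rw [union_inter_distrib_right]
    exact (card_union_le _ _).trans_lt h
  obtain ⟨j, hjS, hjAB⟩ := exists_mem_notMem_of_card_lt_card hlt
  exact ⟨j, hjS, fun hjA => hjAB (by simp [hjA, hjS]), fun hjB => hjAB (by simp [hjB, hjS])⟩

section Shifted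

variable {n k ℓ : ℕ} {F : Finset (Finset ℕ)}

theorem IsShifted.exists_shift_mem (hℓ : 2 * k ≤ ℓ) (hF : ∀ A ∈ F, A ⊆ Icc 1 n)
    (hunif : ∀ A ∈ F, A.card = k) (hsh : IsShifted ℓ n F) {A B : Finset ℕ} (hA : A ∈ F)
    (hB : B ∈ F) (hAB : Disjoint (A ∩ Icc 1 ℓ) B) (hAℓ : ¬A ⊆ Icc 1 ℓ) :
    ∃ A' ∈ F, Disjoint (A' ∩ Icc 1 ℓ) B ∧ (A' \ Icc 1 ℓ).card < (A \ Icc 1 ℓ).card := by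
  obtain ⟨i, hiA, hiℓ⟩ := not_subset.mp hAℓ
  have hcard : (A ∩ Icc 1 ℓ).card + (B ∩ Icc 1 ℓ).card < (Icc 1 ℓ).card := by
    have hAk : (A ∩ Icc 1 ℓ).card < k :=
      hunif A hA ▸ card_lt_card ⟨inter_subset_left, fun h => hiℓ (mem_inter.mp (h hiA)).2⟩
    have hBk : (B ∩ Icc 1 ℓ).card ≤ k := hunif B hB ▸ card_le_card inter_subset_left
    rw [Nat.card_Icc]
    omega
  obtain ⟨j, hjℓ, hjA, hjB⟩ := exists_mem_notMem_of_card_inter_add_lt hcard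
  refine ⟨_, erase_insert_mem_of_shiftFam_eq (hsh i (hF A hA hiA) j hjℓ hiℓ) hA hiA hjA, ?_, ?_⟩
  · refine (disjoint_insert_left.mpr ⟨hjB, hAB⟩).mono_left fun x hx => ?_
    simp only [mem_inter, mem_erase, mem_insert] at hx ⊢
    tauto
  · have hsub : (insert j A).erase i \ Icc 1 ℓ ⊆ (A \ Icc 1 ℓ).erase i := by
      intro x hx
      simp only [mem_sdiff, mem_erase, mem_insert] at hx ⊢
      obtain ⟨⟨hxi, rfl | hxA⟩, hxℓ⟩ := hx
      · exact absurd hjℓ hxℓ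
      · exact ⟨hxi, hxA, hxℓ⟩
    exact card_lt_card (hsub.trans_ssubset (erase_ssubset (mem_sdiff.mpr ⟨hiA, hiℓ⟩)))

theorem IsShifted.not_disjoint_inter_Icc (hℓ : 2 * k ≤ ℓ) (hF : ∀ A ∈ F, A ⊆ Icc 1 n)
    (hunif : ∀ A ∈ F, A.card = k) (hsh : IsShifted ℓ n F) (hint : IntersectingFam F)
    {A B : Finset ℕ} (hA : A ∈ F) (hB : B ∈ F) : ¬Disjoint (A ∩ Icc 1 ℓ) B := by
  induction hm : (A \ Icc 1 ℓ).card using Nat.strong_induction_on generalizing A with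
  | _ m ih =>
    intro hAB
    by_cases hAℓ : A ⊆ Icc 1 ℓ
    · rw [inter_eq_left.mpr hAℓ] at hAB
      exact not_disjoint_iff_nonempty_inter.mpr (hint A hA B hB) hAB
    · obtain ⟨A', hA', hA'B, hlt⟩ := hsh.exists_shift_mem hℓ hF hunif hA hB hAB hAℓ
      exact ih _ (hm ▸ hlt) hA' rfl hA'B

end Shifted

theorem stmt5 (n k ℓ : ℕ) (hℓ : 2 * k ≤ ℓ) (F : Finset (Finset ℕ))
    (hF : ∀ A ∈ F, A ⊆ Icc 1 n) (hunif : ∀ A ∈ F, A.card = k)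
    (hsh : IsShifted ℓ n F) (hint : IntersectingFam F)
    (G : Finset (Finset ℕ)) (hG : G = F.image (fun A => A ∩ Icc 1 ℓ)) :
    IntersectingFam G := by
  subst hG
  simp only [IntersectingFam, forall_mem_image]
  intro A hA B hB
  obtain ⟨x, hxA, hxB⟩ :=
    not_disjoint_iff.mp (hsh.not_disjoint_inter_Icc hℓ hF hunif hint hA hB)
  exact ⟨x, mem_inter.mpr ⟨hxA, mem_inter.mpr ⟨hxB, (mem_inter.mp hxA).2⟩⟩⟩
end

section
/- Let \(\mathcal{F}\) be an \(\ell\)-shifted k-uniform intersecting family on [n] with \(n \ge 4k+\ell\), let \(m = \lfloor (\ell-1)/2 \rfloor\), and define \(\mathcal{G} = \{S \subseteq [\ell] : |S| \le m \text{ and } d_S(\mathcal{F}) \ge 2^{k-m}\binom{n-k-\ell+m}{k-\ell+m}\}\). Then \(\mathcal{G}\) is an intersecting family: any two members of \(\mathcal{G}\) have nonempty intersection. -/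
/-!
Suppose `S₁, S₂ ∈ G` are disjoint and pick `B ∈ F` with trace `S₂`. Shiftedness lets one move the
elements of `A ∩ B`, which lie outside `[ℓ]`, one at a time into unused positions of `[ℓ]`; so a
member `A` with trace `S₁` and `#(A ∩ B) ≤ ℓ - #S₁ - #S₂` could be shifted to a member disjoint
from `B`. Hence every such `A` meets `B \ [ℓ]` in more than `ℓ - #S₁ - #S₂` points and has at most
`k + #S₂ - ℓ - 1` elements outside `[ℓ] ∪ B`. Splitting by the trace on `B \ [ℓ]` gives
`d_{S₁} ≤ 2^(k - #S₂) * C(n - ℓ - k + #S₂, k + #S₂ - ℓ - 1)`, which is below the threshold because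
for `n ≥ 4k + ℓ` each step `C(P, i) → C(P, i + 1)` at least doubles.
-/

open Finset

/-- The degree of a subset S of [ℓ]: the number of members of F whose trace on [ℓ] is S. -/
def dS (F : Finset (Finset ℕ)) (ℓ : ℕ) (S : Finset ℕ) : ℕ :=
  (F.filter (fun A => A ∩ Icc 1 ℓ = S)).card

namespace Nat

theorem choose_le_choose_of_le_of_two_mul_le {P a b : ℕ} (hab : a ≤ b) (hb : 2 * b ≤ P) :
    P.choose a ≤ P.choose b := by
  induction b, hab using Nat.le_induction with
  | base => rfl
  | succ b hab ih => exact (ih (by omega)).trans (choose_le_succ_of_lt_half_left (by omega))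

theorem two_mul_choose_le_choose_succ {P i : ℕ} (h : 3 * i + 3 ≤ P) :
    2 * P.choose i ≤ P.choose (i + 1) := by
  refine Nat.le_of_mul_le_mul_right ?_ (show 0 < i + 1 by omega)
  rw [choose_succ_right_eq, mul_comm 2, mul_assoc]
  exact Nat.mul_le_mul_left _ (by omega)

theorem two_pow_mul_choose_le_choose_add {P r j : ℕ} (h : 3 * (r + j) ≤ P) :
    2 ^ j * P.choose r ≤ P.choose (r + j) := by
  induction j with
  | zero => simp
  | succ j ih =>
    calc 2 ^ (j + 1) * P.choose r = 2 * (2 ^ j * P.choose r) := by ring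
      _ ≤ 2 * P.choose (r + j) := Nat.mul_le_mul_left _ (ih (by omega))
      _ ≤ P.choose (r + j + 1) := two_mul_choose_le_choose_succ (by omega)

theorem two_pow_mul_choose_lt_choose_add {P r u : ℕ} (h : 3 * (r + u + 1) ≤ P) :
    2 ^ u * P.choose r < (P + u).choose (r + u + 1) :=
  calc 2 ^ u * P.choose r < 2 ^ (u + 1) * P.choose r :=
        Nat.mul_lt_mul_of_pos_right (Nat.pow_lt_pow_right one_lt_two u.lt_succ_self)
          (choose_pos (by omega))
    _ ≤ P.choose (r + (u + 1)) := two_pow_mul_choose_le_choose_add (by omega)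
    _ ≤ (P + u).choose (r + u + 1) := choose_le_choose _ (by omega)

end Nat

theorem IsShifted.erase_insert_mem {ℓ n : ℕ} {F : Finset (Finset ℕ)} (hsh : IsShifted ℓ n F)
    (hF : ∀ A ∈ F, A ⊆ Icc 1 n) {A : Finset ℕ} (hA : A ∈ F) {i j : ℕ} (hi : i ∈ A \ Icc 1 ℓ)
    (hj : j ∈ Icc 1 ℓ \ A) : (insert j A).erase i ∈ F := by
  rw [mem_sdiff] at hi hj
  have h : shiftSet F i j A ∈ shiftFam F i j := mem_image_of_mem _ hA
  rw [hsh i (hF A hA hi.1) j hj.1 hi.2, shiftSet] at h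
  split_ifs at h with hc
  · exact h
  · by_contra h'
    exact hc ⟨hi.1, hj.2, h'⟩

theorem IsShifted.exists_disjoint {ℓ n : ℕ} {F : Finset (Finset ℕ)} (hsh : IsShifted ℓ n F)
    (hF : ∀ A ∈ F, A ⊆ Icc 1 n) {A B : Finset ℕ} (hA : A ∈ F)
    (hAB : Disjoint (A ∩ B) (Icc 1 ℓ)) (hcard : #((A ∪ B) ∩ Icc 1 ℓ) + #(A ∩ B) ≤ ℓ) :
    ∃ A' ∈ F, Disjoint A' B := by
  induction h : #(A ∩ B) generalizing A with
  | zero => exact ⟨A, hA, disjoint_iff_inter_eq_empty.2 (card_eq_zero.1 h)⟩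
  | succ c ih =>
    -- Shift some `i ∈ A ∩ B` to a free `j ∈ [ℓ]`: `#(A ∩ B)` drops by one, the trace grows by one.
    obtain ⟨i, hi⟩ : (A ∩ B).Nonempty := card_pos.1 (by omega)
    obtain ⟨j, hj⟩ : (Icc 1 ℓ \ (A ∪ B)).Nonempty := by
      rw [← card_pos, card_sdiff, Nat.card_Icc]; omega
    have hiℓ : i ∉ Icc 1 ℓ := disjoint_left.1 hAB hi
    simp only [mem_inter, mem_sdiff, mem_union, not_or] at hi hj
    have hA' := hsh.erase_insert_mem hF hA (mem_sdiff.2 ⟨hi.1, hiℓ⟩) (mem_sdiff.2 ⟨hj.1, hj.2.1⟩)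
    have hinter : (insert j A).erase i ∩ B = (A ∩ B).erase i := by
      ext x; simp only [mem_inter, mem_erase, mem_insert]; grind
    have htrace : ((insert j A).erase i ∪ B) ∩ Icc 1 ℓ = insert j ((A ∪ B) ∩ Icc 1 ℓ) := by
      ext x; simp only [mem_inter, mem_erase, mem_insert, mem_union]; grind
    have hj' : j ∉ (A ∪ B) ∩ Icc 1 ℓ := by simp [hj.2.1, hj.2.2]
    refine ih hA' ?_ ?_ ?_
    · rw [hinter]; exact hAB.mono_left (erase_subset _ _)
    · rw [htrace, hinter, card_insert_of_notMem hj', card_erase_of_mem (by simp [hi])]; omega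
    · rw [hinter, card_erase_of_mem (by simp [hi]), h]; rfl

theorem IntersectingFam.lt_card_trace_union_add_card_inter {ℓ n : ℕ} {F : Finset (Finset ℕ)}
    (hint : IntersectingFam F) (hsh : IsShifted ℓ n F) (hF : ∀ A ∈ F, A ⊆ Icc 1 n)
    {A B : Finset ℕ} (hA : A ∈ F) (hB : B ∈ F) (hAB : Disjoint (A ∩ B) (Icc 1 ℓ)) :
    ℓ < #((A ∪ B) ∩ Icc 1 ℓ) + #(A ∩ B) := by
  by_contra! hcard
  obtain ⟨A', hA', hA'B⟩ := hsh.exists_disjoint hF hA hAB hcard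
  exact not_disjoint_iff_nonempty_inter.2 (hint A' hA' B hB) hA'B

theorem IntersectingFam.lt_card_add_card_inter_sdiff {ℓ n : ℕ} {F : Finset (Finset ℕ)}
    (hint : IntersectingFam F) (hsh : IsShifted ℓ n F) (hF : ∀ A ∈ F, A ⊆ Icc 1 n)
    {A B S T : Finset ℕ} (hA : A ∈ F) (hB : B ∈ F) (hAS : A ∩ Icc 1 ℓ = S)
    (hBT : B ∩ Icc 1 ℓ = T) (hST : Disjoint S T) :
    ℓ < #S + #T + #(A ∩ (B \ Icc 1 ℓ)) := by
  have hAB : Disjoint (A ∩ B) (Icc 1 ℓ) := by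
    rw [disjoint_iff_inter_eq_empty, inter_inter_distrib_right, hAS, hBT]
    exact disjoint_iff_inter_eq_empty.1 hST
  have h := hint.lt_card_trace_union_add_card_inter hsh hF hA hB hAB
  rw [union_inter_distrib_right, hAS, hBT, card_union_of_disjoint hST] at h
  rwa [← inter_sdiff_assoc, sdiff_eq_self_of_disjoint hAB]

theorem card_filter_inter_eq_le {α : Type*} [DecidableEq α] {F : Finset (Finset α)}
    {U X : Finset α} {k : ℕ} (hF : ∀ A ∈ F, A ⊆ U) (hunif : ∀ A ∈ F, #A = k) (hX : X ⊆ U)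
    (T : Finset α) : #{A ∈ F | A ∩ X = T} ≤ (#U - #X).choose (k - #T) := by
  rw [← card_sdiff_of_subset hX, ← card_powersetCard]
  refine card_le_card_of_injOn (· \ X) (fun A hA => ?_) (fun A hA A' hA' h => ?_)
  · simp only [mem_coe, mem_filter] at hA
    rw [mem_coe, mem_powersetCard, card_sdiff, inter_comm, hA.2, hunif A hA.1]
    exact ⟨sdiff_subset_sdiff (hF A hA.1) subset_rfl, rfl⟩
  · simp only [mem_coe, mem_filter] at hA hA'
    rw [← sdiff_union_inter A X, ← sdiff_union_inter A' X, hA.2, hA'.2]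
    exact congrArg (· ∪ T) h

theorem dS_le_two_pow_mul_choose {n k ℓ t : ℕ} {F : Finset (Finset ℕ)}
    (hF : ∀ A ∈ F, A ⊆ Icc 1 n) (hunif : ∀ A ∈ F, #A = k) (hℓn : ℓ ≤ n) {S D : Finset ℕ}
    (hS : S ⊆ Icc 1 ℓ) (hD : D ⊆ Icc 1 n) (hDℓ : Disjoint D (Icc 1 ℓ))
    (ht : ∀ A ∈ F, A ∩ Icc 1 ℓ = S → t ≤ #(A ∩ D)) (hhalf : 2 * (k - #S - t) ≤ n - ℓ - #D) :
    dS F ℓ S ≤ 2 ^ #D * (n - ℓ - #D).choose (k - #S - t) := by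
  rw [← card_powerset, mul_comm]
  refine card_le_mul_card_image_of_maps_to (f := (· ∩ D))
    (fun A _ => mem_powerset.2 inter_subset_right) _ (fun E hE => ?_)
  rcases eq_or_ne #{A ∈ {A ∈ F | A ∩ Icc 1 ℓ = S} | A ∩ D = E} 0 with h0 | h0
  · exact h0.le.trans (Nat.zero_le _)
  obtain ⟨A₁, hA₁⟩ := card_pos.1 (Nat.pos_of_ne_zero h0)
  simp only [mem_filter] at hA₁
  have htE : t ≤ #E := hA₁.2 ▸ ht A₁ hA₁.1.1 hA₁.1.2
  have hSE : Disjoint S E := hDℓ.symm.mono hS (mem_powerset.1 hE)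
  calc #{A ∈ {A ∈ F | A ∩ Icc 1 ℓ = S} | A ∩ D = E}
      ≤ #{A ∈ F | A ∩ (Icc 1 ℓ ∪ D) = S ∪ E} := by
        refine card_le_card fun A hA => ?_
        simp only [mem_filter] at hA ⊢
        exact ⟨hA.1.1, by rw [inter_union_distrib_left, hA.1.2, hA.2]⟩
    _ ≤ (#(Icc 1 n) - #(Icc 1 ℓ ∪ D)).choose (k - #(S ∪ E)) :=
        card_filter_inter_eq_le hF hunif (union_subset (Icc_subset_Icc_right hℓn) hD) _
    _ = (n - ℓ - #D).choose (k - #S - #E) := by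
        rw [card_union_of_disjoint hDℓ.symm, card_union_of_disjoint hSE, Nat.card_Icc,
          Nat.card_Icc]
        congr 1 <;> omega
    _ ≤ (n - ℓ - #D).choose (k - #S - t) :=
        Nat.choose_le_choose_of_le_of_two_mul_le (by omega) hhalf

theorem Nat.two_pow_sub_mul_choose_lt {n k ℓ m s : ℕ} (hn : 4 * k + ℓ ≤ n) (hsk : s ≤ k)
    (hsm : s ≤ m) (hmℓ : m ≤ ℓ) (hkℓ : ℓ < k + s) :
    2 ^ (k - s) * (n - ℓ - (k - s)).choose (k + s - ℓ - 1) <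
      2 ^ (k - m) * (n + m - k - ℓ).choose (k + m - ℓ) := by
  set P := n - ℓ - (k - s)
  set r := k + s - ℓ - 1
  rw [show n + m - k - ℓ = P + (m - s) by omega, show k + m - ℓ = r + (m - s) + 1 by omega]
  calc 2 ^ (k - s) * P.choose r ≤ 2 ^ (k - m) * (2 ^ (m - s) * P.choose r) := by
        rw [← mul_assoc, ← pow_add]
        exact Nat.mul_le_mul_right _ (Nat.pow_le_pow_right two_pos (by omega))
    _ < 2 ^ (k - m) * (P + (m - s)).choose (r + (m - s) + 1) :=
        (Nat.mul_lt_mul_left (by positivity)).2 (Nat.two_pow_mul_choose_lt_choose_add (by omega))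

theorem stmt12 (n k ℓ : ℕ) (hn : 4 * k + ℓ ≤ n)
    (F : Finset (Finset ℕ))
    (hF : ∀ A ∈ F, A ⊆ Icc 1 n) (hunif : ∀ A ∈ F, A.card = k)
    (hsh : IsShifted ℓ n F) (hint : IntersectingFam F)
    (m : ℕ) (hm : m = (ℓ - 1) / 2)
    (G : Finset (Finset ℕ))
    (hG : G = (Icc 1 ℓ).powerset.filter (fun S => S.card ≤ m ∧
      2 ^ (k - m) * Nat.choose (n + m - k - ℓ) (k + m - ℓ) ≤ dS F ℓ S)) :
    ∀ S₁ ∈ G, ∀ S₂ ∈ G, (S₁ ∩ S₂).Nonempty := by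
  subst hG hm
  intro S₁ hS₁ S₂ hS₂
  simp only [mem_filter, mem_powerset] at hS₁ hS₂
  obtain ⟨hS₁ℓ, hs₁, hd₁⟩ := hS₁
  obtain ⟨-, hs₂, hd₂⟩ := hS₂
  by_contra hne
  have hdisj : Disjoint S₁ S₂ := disjoint_iff_inter_eq_empty.2 (not_nonempty_iff_eq_empty.1 hne)
  have hpos : 0 < 2 ^ (k - (ℓ - 1) / 2) * (n + (ℓ - 1) / 2 - k - ℓ).choose (k + (ℓ - 1) / 2 - ℓ) :=
    Nat.mul_pos (by positivity) (Nat.choose_pos (by omega))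
  obtain ⟨A₀, hA₀⟩ := card_pos.1 (hpos.trans_le hd₁)
  obtain ⟨B, hB⟩ := card_pos.1 (hpos.trans_le hd₂)
  rw [mem_filter] at hA₀ hB
  have hlarge : ∀ A ∈ F, A ∩ Icc 1 ℓ = S₁ → ℓ < #S₁ + #S₂ + #(A ∩ (B \ Icc 1 ℓ)) :=
    fun A hA hAS => hint.lt_card_add_card_inter_sdiff hsh hF hA hB.1 hAS hB.2 hdisj
  have hs₂k : #S₂ ≤ k := hB.2 ▸ hunif B hB.1 ▸ card_le_card inter_subset_left
  have hD : #(B \ Icc 1 ℓ) = k - #S₂ := by rw [card_sdiff, inter_comm (Icc 1 ℓ), hB.2, hunif B hB.1]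
  have hkℓ : ℓ < k + #S₂ := by
    have h₁ : #(A₀ ∩ (B \ Icc 1 ℓ)) ≤ #(A₀ \ Icc 1 ℓ) := by
      rw [inter_sdiff_left_comm]; exact card_le_card inter_subset_right
    rw [card_sdiff, inter_comm (Icc 1 ℓ), hA₀.2, hunif A₀ hA₀.1] at h₁
    have h₂ := hlarge A₀ hA₀.1 hA₀.2
    omega
  have hcount := dS_le_two_pow_mul_choose hF hunif (by omega) hS₁ℓ
    (sdiff_subset.trans (hF B hB.1)) sdiff_disjoint (t := ℓ + 1 - #S₁ - #S₂)
    (fun A hA hAS => by have := hlarge A hA hAS; omega) (by rw [hD]; omega)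
  rw [hD, show k - #S₁ - (ℓ + 1 - #S₁ - #S₂) = k + #S₂ - ℓ - 1 by omega] at hcount
  exact (hcount.trans_lt (Nat.two_pow_sub_mul_choose_lt hn hs₂k hs₂ (by omega) hkℓ)).not_ge hd₁
end
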